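/- arXiv:math/0305003 — 6 statements merged into one kernel-verified Lean document; each statement's English description precedes it below -/
import Mathlib

section
/- Let V1 = (1,b1,c1) and V2 = (0,b2,c2) in se(2) with b2² + c2² = 1. Define, for a target (θ,x,y) ∈ SE(2), [α;β] = [[b2,c2],[-c2,b2]]·([x;y] − [[-c1,b1],[b1,c1]]·[1−cos θ; sin θ]), ρ = √(α²+β²), t1 = atan2(β,α) (angle of (α,β)), t2 = ρ, t3 = θ − t1. Then exp(t1·V1)·exp(t2·V2)·exp(t3·V1) equals the element (θ,x,y) of SE(2), i.e., the matrix [[cos θ, −sin θ, x],[sin θ, cos θ, y],[0,0,1]]. -/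
open Matrix Real

def eθ : Matrix (Fin 3) (Fin 3) ℝ := !![0,-1,0;1,0,0;0,0,0]
def ex : Matrix (Fin 3) (Fin 3) ℝ := !![0,0,1;0,0,0;0,0,0]
def ey : Matrix (Fin 3) (Fin 3) ℝ := !![0,0,0;0,0,1;0,0,0]

def se2 (a b c : ℝ) : Matrix (Fin 3) (Fin 3) ℝ := a • eθ + b • ex + c • ey

/-- The element (θ,x,y) of SE(2) as a homogeneous matrix. -/
noncomputable def gSE2 (θ x y : ℝ) : Matrix (Fin 3) (Fin 3) ℝ :=
  !![cos θ, -sin θ, x; sin θ, cos θ, y; 0, 0, 1]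

/-- atan2: the angle of the point (α,β), with the convention atan2 of (0,0) being 0. -/
noncomputable def ang (α β : ℝ) : ℝ := Complex.arg (α + β * Complex.I)

section helpers
abbrev M3 := Matrix (Fin 3) (Fin 3) ℝ

lemma exp_sq_zero (M : M3) (h : M * M = 0) : NormedSpace.exp M = 1 + M := by
  rw [NormedSpace.exp_eq_tsum ℝ]
  show (∑' n : ℕ, ((n.factorial : ℝ))⁻¹ • M ^ n) = 1 + M
  have hpow : ∀ n, 2 ≤ n → M ^ n = 0 := by
    intro n hn
    obtain ⟨k, rfl⟩ := Nat.exists_eq_add_of_le hn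
    rw [pow_add, pow_two, h, zero_mul]
  rw [tsum_eq_sum (s := {0, 1}) (by
    intro n hn
    simp only [Finset.mem_insert, Finset.mem_singleton] at hn
    push_neg at hn
    rw [hpow n (by omega), smul_zero])]
  simp [Finset.sum_insert, Finset.sum_singleton]

noncomputable def φ : ℂ × ℝ →ₐ[ℝ] M3 where
  toFun p := !![p.1.re, -p.1.im, 0; p.1.im, p.1.re, 0; 0, 0, p.2]
  map_one' := by
    ext i j
    fin_cases i <;> fin_cases j <;> simp [Matrix.one_apply, Matrix.vecHead, Matrix.vecTail]
  map_mul' p q := by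
    ext i j
    fin_cases i <;> fin_cases j <;>
      simp [Matrix.mul_apply, Fin.sum_univ_succ, Complex.mul_re, Complex.mul_im,
        Matrix.vecHead, Matrix.vecTail] <;> ring
  map_zero' := by
    ext i j; fin_cases i <;> fin_cases j <;> simp [Matrix.vecHead, Matrix.vecTail]
  map_add' p q := by
    ext i j; fin_cases i <;> fin_cases j <;> simp [Matrix.vecHead, Matrix.vecTail] <;> ring
  commutes' r := by
    ext i j
    fin_cases i <;> fin_cases j <;>
      simp [Algebra.algebraMap_eq_smul_one, Matrix.smul_apply, Matrix.one_apply,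
        Matrix.vecHead, Matrix.vecTail]

lemma φcont : Continuous φ := by
  apply continuous_matrix
  intro i j
  fin_cases i <;> fin_cases j <;> simp [φ, Matrix.vecHead, Matrix.vecTail] <;> fun_prop

lemma exp_rot (t : ℝ) :
    NormedSpace.exp (t • eθ) = !![cos t, -sin t, 0; sin t, cos t, 0; 0, 0, 1] := by
  letI : SeminormedRing M3 := Matrix.linftyOpSemiNormedRing
  letI : NormedRing M3 := Matrix.linftyOpNormedRing
  letI : NormedAlgebra ℝ M3 := Matrix.linftyOpNormedAlgebra
  have h1 : t • eθ = φ ((t : ℂ) * Complex.I, (0 : ℝ)) := by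
    ext i j; fin_cases i <;> fin_cases j <;> simp [φ, eθ, Matrix.vecHead, Matrix.vecTail]
  rw [h1, show NormedSpace.exp (φ ((t : ℂ) * Complex.I, (0 : ℝ))) = φ (NormedSpace.exp ((t : ℂ) * Complex.I, (0 : ℝ))) from
    (NormedSpace.map_exp φ φcont _).symm]
  have h2 : NormedSpace.exp (((t : ℂ) * Complex.I, (0 : ℝ)) : ℂ × ℝ)
      = ((Complex.exp ((t : ℂ) * Complex.I)), (1 : ℝ)) := by
    apply Prod.ext
    · rw [Prod.fst_exp, ← Complex.exp_eq_exp_ℂ]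
    · rw [Prod.snd_exp, ← Real.exp_eq_exp_ℝ, Real.exp_zero]
  rw [h2]
  have h3 : Complex.exp ((t : ℂ) * Complex.I) = Complex.cos t + Complex.sin t * Complex.I :=
    by rw [Complex.exp_mul_I]
  ext i j
  fin_cases i <;> fin_cases j <;>
    simp [φ, h3, ← Complex.ofReal_cos, ← Complex.ofReal_sin, Matrix.vecHead, Matrix.vecTail]

noncomputable def Gm (t b c : ℝ) : M3 :=
  !![cos t, -sin t, b*sin t - c*(1-cos t); sin t, cos t, b*(1-cos t)+c*sin t; 0,0,1]

lemma expV1 (t b c : ℝ) : NormedSpace.exp (t • se2 1 b c) = Gm t b c := by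
  have hUm : (!![1,0,-c;0,1,b;0,0,1] : M3) * !![1,0,c;0,1,-b;0,0,1] = 1 := by
    ext i j
    fin_cases i <;> fin_cases j <;>
      simp [Matrix.mul_apply, Fin.sum_univ_succ, Matrix.one_apply,
        Matrix.vecHead, Matrix.vecTail]
  have hUm' : (!![1,0,c;0,1,-b;0,0,1] : M3) * !![1,0,-c;0,1,b;0,0,1] = 1 := by
    ext i j
    fin_cases i <;> fin_cases j <;>
      simp [Matrix.mul_apply, Fin.sum_univ_succ, Matrix.one_apply,
        Matrix.vecHead, Matrix.vecTail]
  set U : M3ˣ := ⟨!![1,0,-c;0,1,b;0,0,1], !![1,0,c;0,1,-b;0,0,1], hUm, hUm'⟩ with hU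
  have hconj : t • se2 1 b c = (U : M3) * (t • eθ) * ((U⁻¹ : M3ˣ) : M3) := by
    ext i j
    fin_cases i <;> fin_cases j <;>
      simp [hU, se2, eθ, ex, ey, Matrix.mul_apply, Fin.sum_univ_succ,
        Matrix.vecHead, Matrix.vecTail] <;> ring
  rw [hconj, Matrix.exp_units_conj U, exp_rot]
  ext i j
  fin_cases i <;> fin_cases j <;>
    simp [hU, Gm, Matrix.mul_apply, Fin.sum_univ_succ,
      Matrix.vecHead, Matrix.vecTail] <;> ring

end helpers

/-- Inversion for S1-systems on SE(2): the map IK[S1] is a global right inverse of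
the forward kinematics FK^(1,2,1). -/


theorem inversion_S1_SE2 (b1 c1 b2 c2 : ℝ) (h : b2 ^ 2 + c2 ^ 2 = 1) (θ x y : ℝ) :
    let α := b2 * (x - (-c1 * (1 - cos θ) + b1 * sin θ)) +
             c2 * (y - (b1 * (1 - cos θ) + c1 * sin θ))
    let β := -c2 * (x - (-c1 * (1 - cos θ) + b1 * sin θ)) +
             b2 * (y - (b1 * (1 - cos θ) + c1 * sin θ))
    let t1 := ang α β
    let t2 := Real.sqrt (α ^ 2 + β ^ 2)
    let t3 := θ - t1
    NormedSpace.exp (t1 • se2 1 b1 c1) * NormedSpace.exp (t2 • se2 0 b2 c2) *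
      NormedSpace.exp (t3 • se2 1 b1 c1) = gSE2 θ x y := by
  intro α β t1 t2 t3
  have hα : α = b2 * (x - (-c1 * (1 - cos θ) + b1 * sin θ)) +
             c2 * (y - (b1 * (1 - cos θ) + c1 * sin θ)) := rfl
  have hβ : β = -c2 * (x - (-c1 * (1 - cos θ) + b1 * sin θ)) +
             b2 * (y - (b1 * (1 - cos θ) + c1 * sin θ)) := rfl
  have ht3 : t3 = θ - t1 := rfl
  -- key trig facts
  have hre : ((α : ℂ) + β * Complex.I).re = α := by simp
  have him : ((α : ℂ) + β * Complex.I).im = β := by simp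
  have habs : ‖((α : ℂ) + β * Complex.I)‖ = t2 := by
    rw [Complex.norm_def]
    congr 1
    simp [Complex.normSq_apply, hre, him]
    ring
  have Hc : t2 * Real.cos t1 = α := by
    by_cases hz : ((α : ℂ) + β * Complex.I) = 0
    · have h0 : α = 0 ∧ β = 0 := by
        constructor
        · rw [← hre, hz]; simp
        · rw [← him, hz]; simp
      have ht20 : t2 = 0 := by rw [← habs, hz]; simp
      rw [ht20, h0.1, zero_mul]
    · have : Real.cos t1 = ((α : ℂ) + β * Complex.I).re / ‖((α : ℂ) + β * Complex.I)‖ :=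
        Complex.cos_arg hz
      rw [this, hre, habs]
      have ht2 : t2 ≠ 0 := by rw [← habs]; exact (norm_ne_zero_iff.mpr hz)
      field_simp
  have Hs : t2 * Real.sin t1 = β := by
    have : Real.sin t1 = ((α : ℂ) + β * Complex.I).im / ‖((α : ℂ) + β * Complex.I)‖ :=
      Complex.sin_arg _
    rw [this, him, habs]
    by_cases ht2 : t2 = 0
    · rw [ht2] at habs ⊢
      have : β = 0 := by
        have := norm_eq_zero.mp habs
        rw [← him, this]; simp
      rw [this]; simp
    · field_simp
  rw [hα] at Hc
  rw [hβ] at Hs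
  have pyth : Real.sin t1 ^ 2 + Real.cos t1 ^ 2 = 1 := Real.sin_sq_add_cos_sq t1
  clear hα hβ habs hre him
  -- middle exponential
  have hmid : NormedSpace.exp (t2 • se2 0 b2 c2) = !![1,0,t2*b2;0,1,t2*c2;0,0,1] := by
    rw [exp_sq_zero _ (by
      ext i j
      fin_cases i <;> fin_cases j <;>
        simp [se2, eθ, ex, ey, Matrix.mul_apply, Fin.sum_univ_succ,
          Matrix.vecHead, Matrix.vecTail])]
    ext i j
    fin_cases i <;> fin_cases j <;>
      simp [se2, eθ, ex, ey, Matrix.one_apply, Matrix.vecHead, Matrix.vecTail]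
  rw [expV1, hmid, expV1, ht3]
  ext i j
  fin_cases i <;> fin_cases j <;>
    simp [Gm, gSE2, Matrix.mul_apply, Fin.sum_univ_succ,
      Matrix.vecHead, Matrix.vecTail, Real.cos_sub, Real.sin_sub] <;>
    first
      | linear_combination (cos θ) * pyth
      | linear_combination (-sin θ) * pyth
      | linear_combination (sin θ) * pyth
      | linear_combination b2 * Hc - c2 * Hs +
          (x - (-c1 * (1 - cos θ) + b1 * sin θ)) * h + (b1 * sin θ + c1 * cos θ) * pyth
      | linear_combination c2 * Hc + b2 * Hs +
          (y - (b1 * (1 - cos θ) + c1 * sin θ)) * h + (c1 * sin θ - b1 * cos θ) * pyth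
end

section
/- Let V1 = (1,b1,c1) and V2 = (1,b2,c2) in se(2) with (b1,c1) ≠ (b2,c2). Write d = ‖(c1−c2, b1−b2)‖. For (θ,x,y) ∈ SE(2) define [α;β] = (1/d²)·[[c1−c2, b2−b1],[b1−b2, c1−c2]]·([x;y] − [[-c1,b1],[b1,c1]]·[1−cos θ; sin θ]) and ρ = √(α²+β²). If d² ≥ ‖(x,y)‖² and d² ≥ 2(1−cos θ)·(b1²+c1²), then ρ ≤ 2. -/
open Real

/-- Well-definedness of the inverse-kinematics map for S2-systems on SE(2):
on the neighborhood U of the identity, ρ ≤ 2. -/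
theorem S2_rho_le_two (b1 c1 b2 c2 θ x y : ℝ)
    (hV : (b1, c1) ≠ (b2, c2))
    (h1 : (c1 - c2) ^ 2 + (b1 - b2) ^ 2 ≥ x ^ 2 + y ^ 2)
    (h2 : (c1 - c2) ^ 2 + (b1 - b2) ^ 2 ≥ 2 * (1 - cos θ) * (b1 ^ 2 + c1 ^ 2)) :
    let d2 := (c1 - c2) ^ 2 + (b1 - b2) ^ 2
    let p := x - (-c1 * (1 - cos θ) + b1 * sin θ)
    let q := y - (b1 * (1 - cos θ) + c1 * sin θ)
    let α := (1 / d2) * ((c1 - c2) * p + (b2 - b1) * q)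
    let β := (1 / d2) * ((b1 - b2) * p + (c1 - c2) * q)
    Real.sqrt (α ^ 2 + β ^ 2) ≤ 2 := by
  intro d2 p q α β
  have hd2 : 0 < (c1 - c2) ^ 2 + (b1 - b2) ^ 2 := by
    by_contra h
    push_neg at h
    have hb : (b1 - b2) ^ 2 = 0 :=
      le_antisymm (by nlinarith [sq_nonneg (c1 - c2)]) (sq_nonneg _)
    have hc : (c1 - c2) ^ 2 = 0 :=
      le_antisymm (by nlinarith [sq_nonneg (b1 - b2)]) (sq_nonneg _)
    have hb' : b1 = b2 := sub_eq_zero.mp (pow_eq_zero_iff two_ne_zero |>.mp hb)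
    have hc' : c1 = c2 := sub_eq_zero.mp (pow_eq_zero_iff two_ne_zero |>.mp hc)
    exact hV (by rw [hb', hc'])
  have hpq : p ^ 2 + q ^ 2 ≤ 4 * ((c1 - c2) ^ 2 + (b1 - b2) ^ 2) := by
    show (x - (-c1 * (1 - cos θ) + b1 * sin θ)) ^ 2
        + (y - (b1 * (1 - cos θ) + c1 * sin θ)) ^ 2
        ≤ 4 * ((c1 - c2) ^ 2 + (b1 - b2) ^ 2)
    have hs := sin_sq_add_cos_sq θ
    nlinarith [sq_nonneg (x + (-c1 * (1 - cos θ) + b1 * sin θ)),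
      sq_nonneg (y + (b1 * (1 - cos θ) + c1 * sin θ))]
  have key : α ^ 2 + β ^ 2 = (p ^ 2 + q ^ 2) / ((c1 - c2) ^ 2 + (b1 - b2) ^ 2) := by
    show (1 / ((c1 - c2) ^ 2 + (b1 - b2) ^ 2) * ((c1 - c2) * p + (b2 - b1) * q)) ^ 2
        + (1 / ((c1 - c2) ^ 2 + (b1 - b2) ^ 2) * ((b1 - b2) * p + (c1 - c2) * q)) ^ 2
        = (p ^ 2 + q ^ 2) / ((c1 - c2) ^ 2 + (b1 - b2) ^ 2)
    field_simp
    ring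
  have hle : α ^ 2 + β ^ 2 ≤ 4 := by
    rw [key, div_le_iff₀ hd2]
    linarith
  calc Real.sqrt (α ^ 2 + β ^ 2) ≤ Real.sqrt 4 := Real.sqrt_le_sqrt hle
    _ = 2 := by
        rw [show (4 : ℝ) = 2 ^ 2 by norm_num, Real.sqrt_sq (by norm_num)]
end

section
/- Let V1 = (1,b1,c1) and V2 = (1,b2,c2) be elements of se(2). Then for all real t1, t2, t3 with θ := t1 + t2 + t3, one has exp(t1·V1)·exp(t2·V2)·exp(t3·V1) = (θ, x, y) where [x;y] = [[-c1,b1],[b1,c1]]·[1−cos θ; sin θ] + [[c1−c2, b1−b2],[b2−b1, c1−c2]]·[cos t1 − cos(t1+t2); sin t1 − sin(t1+t2)]. -/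
open Matrix Real

noncomputable def Fm (b c t : ℝ) : Matrix (Fin 3) (Fin 3) ℝ :=
  cos t • !![(1:ℝ),0,c;0,1,-b;0,0,0] + sin t • se2 1 b c + !![(0:ℝ),0,-c;0,0,b;0,0,1]

lemma Fm_eq (b c t : ℝ) :
    Fm b c t = gSE2 t (b * sin t - c * (1 - cos t)) (b * (1 - cos t) + c * sin t) := by
  ext i j
  fin_cases i <;> fin_cases j <;>
    simp [Fm, gSE2, se2, eθ, ex, ey, Matrix.vecHead, Matrix.vecTail] <;> ring

set_option maxHeartbeats 1000000 in
lemma exp_se2 (b c t : ℝ) :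
    NormedSpace.exp (t • se2 1 b c)
      = gSE2 t (b * sin t - c * (1 - cos t)) (b * (1 - cos t) + c * sin t) := by
  letI : NormedRing (Matrix (Fin 3) (Fin 3) ℝ) := Matrix.linftyOpNormedRing
  letI : NormedAlgebra ℝ (Matrix (Fin 3) (Fin 3) ℝ) := Matrix.linftyOpNormedAlgebra
  set A : Matrix (Fin 3) (Fin 3) ℝ := se2 1 b c with hA
  set C : Matrix (Fin 3) (Fin 3) ℝ := !![(1:ℝ),0,c;0,1,-b;0,0,0] with hC
  set K : Matrix (Fin 3) (Fin 3) ℝ := !![(0:ℝ),0,-c;0,0,b;0,0,1] with hK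
  have hF' : ∀ t : ℝ, HasDerivAt (Fm b c) ((-sin t) • C + cos t • A) t := by
    intro t
    exact (((Real.hasDerivAt_cos t).smul_const C).add
      ((Real.hasDerivAt_sin t).smul_const A)).add_const K
  have hAC : A * C = A := by
    ext i j
    fin_cases i <;> fin_cases j <;> simp [hA, hC, se2, eθ, ex, ey, Matrix.mul_apply,
      Fin.sum_univ_succ, Matrix.vecHead, Matrix.vecTail] <;> ring
  have hAA : A * A = -C := by
    ext i j
    fin_cases i <;> fin_cases j <;> simp [hA, hC, se2, eθ, ex, ey, Matrix.mul_apply,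
      Fin.sum_univ_succ, Matrix.vecHead, Matrix.vecTail] <;> ring
  have hAK : A * K = 0 := by
    ext i j
    fin_cases i <;> fin_cases j <;> simp [hA, hK, se2, eθ, ex, ey, Matrix.mul_apply,
      Fin.sum_univ_succ, Matrix.vecHead, Matrix.vecTail]
  have hAF : ∀ t : ℝ, A * Fm b c t = (-sin t) • C + cos t • A := by
    intro t
    simp only [Fm, ← hA, ← hC, ← hK, Matrix.mul_add, Matrix.mul_smul, hAC, hAA, hAK,
      add_zero, smul_neg]
    module
  set g : ℝ → Matrix (Fin 3) (Fin 3) ℝ :=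
    fun t => NormedSpace.exp (t • (-A)) * Fm b c t with hg
  have hgd : ∀ t : ℝ, HasDerivAt g 0 t := by
    intro t
    have h1 : HasDerivAt (fun t : ℝ => NormedSpace.exp (t • (-A)))
        ((-A) * NormedSpace.exp (t • (-A))) t := hasDerivAt_exp_smul_const' (-A) t
    have h2 := (h1.mul (hF' t))
    convert h2 using 1
    case e'_4 => rfl
    case e'_5 => rfl
    case e'_6 => rfl
    case e'_8 => rfl
    have hcomm : NormedSpace.exp (t • (-A)) * A = A * NormedSpace.exp (t • (-A)) :=
      ((((Commute.refl A).neg_right).smul_right t).exp_right).symm.eq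
    rw [← hAF t, ← mul_assoc, hcomm]
    simp [neg_mul]
  have hconst : g t = g 0 := by
    have hd : Differentiable ℝ g := fun t => (hgd t).differentiableAt
    have : ∀ x, deriv g x = 0 := fun x => (hgd x).deriv
    exact is_const_of_deriv_eq_zero hd this t 0
  have hF0 : Fm b c 0 = 1 := by
    ext i j
    fin_cases i <;> fin_cases j <;> simp [Fm, se2, eθ, ex, ey, Matrix.one_apply, Matrix.vecHead, Matrix.vecTail]
  have hg0 : g 0 = 1 := by
    show NormedSpace.exp ((0:ℝ) • (-A)) * Fm b c 0 = 1
    rw [zero_smul, NormedSpace.exp_zero, one_mul, hF0]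
  have key : NormedSpace.exp (t • A) * g t = NormedSpace.exp (t • A) := by
    rw [hconst, hg0, mul_one]
  have hinv : NormedSpace.exp (t • A) * NormedSpace.exp (t • (-A)) = 1 := by
    refine (NormedSpace.exp_add_of_commute_of_mem_ball (𝕂 := ℝ) (((Commute.refl A).neg_right.smul_left t).smul_right t)
      ((NormedSpace.expSeries_radius_eq_top ℝ (Matrix (Fin 3) (Fin 3) ℝ)).symm ▸ edist_lt_top _ _)
      ((NormedSpace.expSeries_radius_eq_top ℝ (Matrix (Fin 3) (Fin 3) ℝ)).symm ▸ edist_lt_top _ _)).symm.trans ?_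
    simp [NormedSpace.exp_zero]
  rw [hg, ← mul_assoc, hinv, one_mul] at key
  rw [← key, Fm_eq]

lemma gSE2_mul (a x y a' x' y' : ℝ) :
    gSE2 a x y * gSE2 a' x' y'
      = gSE2 (a + a') (cos a * x' - sin a * y' + x) (sin a * x' + cos a * y' + y) := by
  ext i j
  fin_cases i <;> fin_cases j <;>
    simp [gSE2, Matrix.mul_apply, Fin.sum_univ_succ, cos_add, sin_add, Matrix.vecHead, Matrix.vecTail] <;> ring

/-- Closed form of FK^(1,2,1) for two vector fields V1 = (1,b1,c1), V2 = (1,b2,c2) in se(2). -/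
theorem FK121_S2 (b1 c1 b2 c2 t1 t2 t3 : ℝ) :
    let θ := t1 + t2 + t3
    let x := (-c1 * (1 - cos θ) + b1 * sin θ) +
      ((c1 - c2) * (cos t1 - cos (t1 + t2)) + (b1 - b2) * (sin t1 - sin (t1 + t2)))
    let y := (b1 * (1 - cos θ) + c1 * sin θ) +
      ((b2 - b1) * (cos t1 - cos (t1 + t2)) + (c1 - c2) * (sin t1 - sin (t1 + t2)))
    NormedSpace.exp (t1 • se2 1 b1 c1) * NormedSpace.exp (t2 • se2 1 b2 c2) *
      NormedSpace.exp (t3 • se2 1 b1 c1) = gSE2 θ x y := by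
  intro θ x y
  rw [exp_se2, exp_se2, exp_se2, gSE2_mul, gSE2_mul]
  have hx : cos (t1 + t2) * (b1 * sin t3 - c1 * (1 - cos t3)) -
      sin (t1 + t2) * (b1 * (1 - cos t3) + c1 * sin t3) +
      (cos t1 * (b2 * sin t2 - c2 * (1 - cos t2)) -
        sin t1 * (b2 * (1 - cos t2) + c2 * sin t2) +
        (b1 * sin t1 - c1 * (1 - cos t1))) = x := by
    simp only [x, θ]
    simp only [show t1 + t2 + t3 = (t1 + t2) + t3 by ring, cos_add (t1+t2) t3,
      sin_add (t1+t2) t3, cos_add t1 t2, sin_add t1 t2]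
    ring
  have hy : sin (t1 + t2) * (b1 * sin t3 - c1 * (1 - cos t3)) +
      cos (t1 + t2) * (b1 * (1 - cos t3) + c1 * sin t3) +
      (sin t1 * (b2 * sin t2 - c2 * (1 - cos t2)) +
        cos t1 * (b2 * (1 - cos t2) + c2 * sin t2) +
        (b1 * (1 - cos t1) + c1 * sin t1)) = y := by
    simp only [y, θ]
    simp only [show t1 + t2 + t3 = (t1 + t2) + t3 by ring, cos_add (t1+t2) t3,
      sin_add (t1+t2) t3, cos_add t1 t2, sin_add t1 t2]
    ring
  rw [show t1 + t2 + t3 = θ from rfl, hx, hy]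
end

section
/- For a unit vector V2 = (a,b,c) ∈ R³ and t ∈ R, the matrix exponential exp(t·hat(V2)) equals the matrix with rows [a² + (1−a²)cos t, ba(1−cos t) − c sin t, ca(1−cos t) + b sin t], [ab(1−cos t) + c sin t, b² + (1−b²)cos t, cb(1−cos t) − a sin t], [ac(1−cos t) − b sin t, bc(1−cos t) + a sin t, c² + (1−c²)cos t]. -/
open Matrix Real

def hat (v : Fin 3 → ℝ) : Matrix (Fin 3) (Fin 3) ℝ :=
  !![0, -v 2, v 1; v 2, 0, -v 0; -v 1, v 0, 0]

attribute [local instance] Matrix.linftyOpNormedAddCommGroup Matrix.linftyOpNormedRing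
  Matrix.linftyOpNormedAlgebra

/-- If `K ^ 3 = -K`, then `exp (t • K) = 1 + sin t • K + (1 - cos t) • K ^ 2`. -/
theorem exp_smul_of_cube_eq_neg (K : Matrix (Fin 3) (Fin 3) ℝ) (hK : K ^ 3 = -K) (t : ℝ) :
    NormedSpace.exp (t • K) =
      1 + Real.sin t • K + (1 - Real.cos t) • (K ^ 2) := by
  set M : ℝ → Matrix (Fin 3) (Fin 3) ℝ :=
    fun s => 1 + Real.sin s • K + (1 - Real.cos s) • (K ^ 2) with hM
  have hMd : ∀ s, HasDerivAt M (K * M s) s := by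
    intro s
    have h1 : HasDerivAt (fun s : ℝ => Real.sin s • K) (Real.cos s • K) s :=
      (Real.hasDerivAt_sin s).smul_const K
    have h2 : HasDerivAt (fun s : ℝ => (1 - Real.cos s) • (K ^ 2))
        (Real.sin s • (K ^ 2)) s := by
      have := ((Real.hasDerivAt_cos s).const_sub 1).smul_const (K ^ 2)
      simp at this; exact this
    have := ((hasDerivAt_const s (1 : Matrix (Fin 3) (Fin 3) ℝ)).add h1).add h2
    refine this.congr_deriv ?_
    have h3 : K * K ^ 2 = -K := by rw [← pow_succ']; exact hK
    simp only [hM]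
    rw [mul_add, mul_add, mul_one, mul_smul_comm, mul_smul_comm, ← sq, h3]
    module
  have hE : ∀ s : ℝ, HasDerivAt (fun u : ℝ => NormedSpace.exp (u • (-K)))
      (NormedSpace.exp (s • (-K)) * (-K)) s := fun s =>
    hasDerivAt_exp_smul_const (-K) s
  set D : ℝ → Matrix (Fin 3) (Fin 3) ℝ :=
    fun s => NormedSpace.exp (s • (-K)) * M s with hD
  have hDd : ∀ s, HasDerivAt D 0 s := by
    intro s
    have := (hE s).mul (hMd s)
    refine this.congr_deriv ?_
    rw [mul_assoc, neg_mul, mul_neg]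
    abel
  have hconst : D t = D 0 :=
    is_const_of_deriv_eq_zero (fun x => (hDd x).differentiableAt)
      (fun x => (hDd x).deriv) t 0
  have hD0 : D 0 = 1 := by
    simp [hD, hM]
  have key : NormedSpace.exp (t • (-K)) * M t = 1 := hconst.trans hD0
  have hcomm : Commute (t • K) (t • (-K)) := by
    simp [Commute, SemiconjBy, smul_neg, mul_smul_comm, smul_mul_assoc]
  have hinv : NormedSpace.exp (t • K) * NormedSpace.exp (t • (-K)) = 1 := by
    erw [← NormedSpace.exp_add_of_commute hcomm]
    simp [smul_neg]
  calc NormedSpace.exp (t • K)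
      = NormedSpace.exp (t • K) * (NormedSpace.exp (t • (-K)) * M t) := by
        rw [key, mul_one]
    _ = (NormedSpace.exp (t • K) * NormedSpace.exp (t • (-K))) * M t := by
        rw [mul_assoc]
    _ = M t := by rw [hinv, one_mul]

set_option maxHeartbeats 1000000 in
/-- Rodrigues' formula: the matrix exponential of `t • hat (a,b,c)` for a unit axis (a,b,c). -/
theorem exp_hat_unit (a b c t : ℝ) (h : a ^ 2 + b ^ 2 + c ^ 2 = 1) :
    NormedSpace.exp (t • hat ![a, b, c]) =
      !![a ^ 2 + (1 - a ^ 2) * cos t, b * a * (1 - cos t) - c * sin t,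
           c * a * (1 - cos t) + b * sin t;
         a * b * (1 - cos t) + c * sin t, b ^ 2 + (1 - b ^ 2) * cos t,
           c * b * (1 - cos t) - a * sin t;
         a * c * (1 - cos t) - b * sin t, b * c * (1 - cos t) + a * sin t,
           c ^ 2 + (1 - c ^ 2) * cos t] := by
  have hK : hat ![a, b, c] ^ 3 = -(hat ![a, b, c]) := by
    ext i j
    fin_cases i <;> fin_cases j <;>
      simp [hat, pow_succ, Matrix.mul_apply, Fin.sum_univ_succ] <;>
      first
        | ring1
        | linear_combination a * h
        | linear_combination (-a) * h
        | linear_combination b * h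
        | linear_combination (-b) * h
        | linear_combination c * h
        | linear_combination (-c) * h
  rw [exp_smul_of_cube_eq_neg _ hK t]
  ext i j
  fin_cases i <;> fin_cases j <;>
    simp [hat, sq, Matrix.mul_apply, Fin.sum_univ_succ, Matrix.one_apply] <;>
    first
      | ring1
      | linear_combination (1 - Real.cos t) * h
      | linear_combination (Real.cos t - 1) * h
end

section
/- Let V1 = (a1,b1,c1,d1) and V2 = (a2,b2,c2,d2) be elements of se(2) × R, with bracket [V1,V2] = (0, c1·a2 − a1·c2, a1·b2 − b1·a2, 0). Then the Lie algebra generated by {V1, V2} equals the whole 4-dimensional algebra se(2) × R if and only if a2·d1 − d2·a1 ≠ 0 and (c1·a2 − a1·c2 ≠ 0 or a1·b2 − b1·a2 ≠ 0). -/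
/-!
Every bracket lies in the translation plane `T = span {e_x, e_y}`, the kernel of the projection
`π` onto the `(θ, z)`-components. Hence every subspace containing `T` is bracket closed, and
such a subspace is everything iff its image under `π` is. The smallest such subspace containing
`V1, V2` is `π⁻¹ (span {π V1, π V2})`, which is proper iff `det (π V1, π V2) = 0`.
Conversely, if `W = [V1, V2] ≠ 0` and `a_i ≠ 0`, then `[V_i, W] = a_i • J W` for the
right-angle rotation `J` of `T`, and `W, J W` span `T`; so every bracket-closed subspace
containing `V1, V2` contains `T`. If `W = 0`, then `span {V1, V2}` is bracket closed and at most
two-dimensional.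
-/

/-- The Lie bracket on se(2) × ℝ in coordinates (a,b,c,d):
[V1,V2] = (0, c1·a2 − a1·c2, a1·b2 − b1·a2, 0). -/
def bracket4 (u v : Fin 4 → ℝ) : Fin 4 → ℝ :=
  ![0, u 2 * v 0 - u 0 * v 2, u 0 * v 1 - u 1 * v 0, 0]

open Submodule
open LinearMap (ker)

lemma span_pair_ne_top_of_two_lt_finrank {K V : Type*} [DivisionRing K] [AddCommGroup V]
    [Module K V] (hV : 2 < Module.finrank K V) (u v : V) : span K {u, v} ≠ ⊤ := by
  classical
  intro h
  have := (finrank_span_finset_le_card (R := K) {u, v}).trans Finset.card_le_two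
  rw [Finset.coe_pair, Set.finrank, h, finrank_top] at this
  omega

lemma span_pair_eq_top_iff {K : Type*} [Field K] (a₁ d₁ a₂ d₂ : K) :
    span K {(a₁, d₁), (a₂, d₂)} = ⊤ ↔ a₂ * d₁ - d₂ * a₁ ≠ 0 := by
  constructor
  · intro h hD
    obtain ⟨x, y, hxy⟩ := mem_span_pair.mp (h ▸ mem_top : ((1, 0) : K × K) ∈ _)
    obtain ⟨z, w, hzw⟩ := mem_span_pair.mp (h ▸ mem_top : ((0, 1) : K × K) ∈ _)
    simp only [Prod.ext_iff, Prod.smul_mk, Prod.mk_add_mk, smul_eq_mul] at hxy hzw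
    obtain ⟨h₁, h₂⟩ := hxy
    obtain ⟨h₃, h₄⟩ := hzw
    have hdet : (a₂ * d₁ - d₂ * a₁) * (y * z - x * w) = 1 := by
      linear_combination (z * d₁ + w * d₂) * h₁ + h₄ - (z * a₁ + w * a₂) * h₂
    simp [hD] at hdet
  · intro hD
    refine eq_top_iff'.mpr fun p => mem_span_pair.mpr
      ⟨(p.2 * a₂ - p.1 * d₂) / (a₂ * d₁ - d₂ * a₁),
        (p.1 * d₁ - p.2 * a₁) / (a₂ * d₁ - d₂ * a₁), ?_⟩
    ext <;> simp <;> field_simp <;> ring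

lemma Submodule.eq_top_iff_map_eq_top_of_ker_le {R M N : Type*} [Ring R] [AddCommGroup M]
    [AddCommGroup N] [Module R M] [Module R N] {f : M →ₗ[R] N} (hf : LinearMap.range f = ⊤)
    {p : Submodule R M} (h : ker f ≤ p) : p = ⊤ ↔ p.map f = ⊤ := by
  rw [LinearMap.map_eq_top_iff hf, sup_eq_left.mpr h]

def IsBracketClosed (S : Submodule ℝ (Fin 4 → ℝ)) : Prop :=
  ∀ u v, u ∈ S → v ∈ S → bracket4 u v ∈ S

lemma bracket4_eq_zero_iff {u v : Fin 4 → ℝ} :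
    bracket4 u v = 0 ↔ u 2 * v 0 - u 0 * v 2 = 0 ∧ u 0 * v 1 - u 1 * v 0 = 0 := by
  simp [bracket4, funext_iff, Fin.forall_fin_succ]

lemma bracket4_smul_add_smul (u v : Fin 4 → ℝ) (x y z w : ℝ) :
    bracket4 (x • u + y • v) (z • u + w • v) = (x * w - y * z) • bracket4 u v := by
  ext i; fin_cases i <;> simp [bracket4] <;> ring

lemma isBracketClosed_span_pair {u v : Fin 4 → ℝ} (h : bracket4 u v = 0) :
    IsBracketClosed (span ℝ {u, v}) := by
  intro s t hs ht
  obtain ⟨x, y, rfl⟩ := mem_span_pair.mp hs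
  obtain ⟨z, w, rfl⟩ := mem_span_pair.mp ht
  rw [bracket4_smul_add_smul, h, smul_zero]
  exact zero_mem _

def projThetaZ : (Fin 4 → ℝ) →ₗ[ℝ] ℝ × ℝ :=
  (LinearMap.proj 0).prod (LinearMap.proj 3)

@[simp] lemma projThetaZ_apply (v : Fin 4 → ℝ) : projThetaZ v = (v 0, v 3) := rfl

lemma range_projThetaZ : LinearMap.range projThetaZ = ⊤ :=
  LinearMap.range_eq_top.mpr fun p => ⟨![p.1, 0, 0, p.2], by simp⟩

lemma mem_ker_projThetaZ {v : Fin 4 → ℝ} : v ∈ ker projThetaZ ↔ v 0 = 0 ∧ v 3 = 0 := by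
  simp [Prod.ext_iff]

lemma bracket4_mem_ker_projThetaZ (u v : Fin 4 → ℝ) : bracket4 u v ∈ ker projThetaZ := by
  simp [bracket4]

lemma IsBracketClosed.of_ker_projThetaZ_le {S : Submodule ℝ (Fin 4 → ℝ)}
    (h : ker projThetaZ ≤ S) : IsBracketClosed S :=
  fun u v _ _ => h (bracket4_mem_ker_projThetaZ u v)

/-- `rotXY = ad e_θ`, the rotation by a right angle of the translation plane `span {e_x, e_y}`. -/
def rotXY (v : Fin 4 → ℝ) : Fin 4 → ℝ := ![0, -v 2, v 1, 0]

lemma bracket4_eq_smul_rotXY {u w : Fin 4 → ℝ} (hw : w ∈ ker projThetaZ) :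
    bracket4 u w = u 0 • rotXY w := by
  rw [mem_ker_projThetaZ] at hw
  ext i; fin_cases i <;> simp [bracket4, rotXY, hw.1]

lemma ker_projThetaZ_le_span_rotXY {w : Fin 4 → ℝ} (hw : w ∈ ker projThetaZ)
    (hw0 : w ≠ 0) : ker projThetaZ ≤ span ℝ {w, rotXY w} := by
  rw [mem_ker_projThetaZ] at hw
  have hN : w 1 ^ 2 + w 2 ^ 2 ≠ 0 := by
    refine fun hN => hw0 ?_
    have h1 : w 1 = 0 := by nlinarith [sq_nonneg (w 1), sq_nonneg (w 2)]
    have h2 : w 2 = 0 := by nlinarith [sq_nonneg (w 1), sq_nonneg (w 2)]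
    ext i; fin_cases i <;> simp [hw.1, hw.2, h1, h2]
  intro t ht
  rw [mem_ker_projThetaZ] at ht
  refine mem_span_pair.mpr ⟨(t 1 * w 1 + t 2 * w 2) / (w 1 ^ 2 + w 2 ^ 2),
    (t 2 * w 1 - t 1 * w 2) / (w 1 ^ 2 + w 2 ^ 2), ?_⟩
  ext i; fin_cases i <;> simp [rotXY, hw.1, hw.2, ht.1, ht.2] <;> field_simp <;> ring

lemma IsBracketClosed.ker_projThetaZ_le {S : Submodule ℝ (Fin 4 → ℝ)} (hS : IsBracketClosed S)
    {u v : Fin 4 → ℝ} (hu : u ∈ S) (hv : v ∈ S) (h0 : u 0 ≠ 0 ∨ v 0 ≠ 0)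
    (huv : bracket4 u v ≠ 0) : ker projThetaZ ≤ S := by
  set w := bracket4 u v
  have hwS : w ∈ S := hS u v hu hv
  have hwker : w ∈ ker projThetaZ := bracket4_mem_ker_projThetaZ u v
  have hrot : rotXY w ∈ S := by
    obtain ⟨x, hxS, hx0⟩ : ∃ x ∈ S, x 0 ≠ 0 := h0.elim (⟨u, hu, ·⟩) (⟨v, hv, ·⟩)
    have := S.smul_mem (x 0)⁻¹ (hS x w hxS hwS)
    rwa [bracket4_eq_smul_rotXY hwker, inv_smul_smul₀ hx0] at this
  exact (ker_projThetaZ_le_span_rotXY hwker huv).trans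
    (span_le.mpr (Set.insert_subset_iff.mpr ⟨hwS, Set.singleton_subset_iff.mpr hrot⟩))

/-- Controllability conditions for 2-input systems on SE(2) × ℝ: the Lie algebra generated
by {V1, V2} is all of se(2) × ℝ iff `a2·d1 − d2·a1 ≠ 0` and
(`c1·a2 − a1·c2 ≠ 0` or `a1·b2 − b1·a2 ≠ 0`). -/
theorem se2R_two_input_controllability (a1 b1 c1 d1 a2 b2 c2 d2 : ℝ) :
    let V1 : Fin 4 → ℝ := ![a1, b1, c1, d1]
    let V2 : Fin 4 → ℝ := ![a2, b2, c2, d2]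
    ((∀ S : Submodule ℝ (Fin 4 → ℝ), V1 ∈ S → V2 ∈ S →
        (∀ u v, u ∈ S → v ∈ S → bracket4 u v ∈ S) → S = ⊤) ↔
      (a2 * d1 - d2 * a1 ≠ 0 ∧ (c1 * a2 - a1 * c2 ≠ 0 ∨ a1 * b2 - b1 * a2 ≠ 0))) := by
  intro V1 V2
  have hspan : span ℝ {projThetaZ V1, projThetaZ V2} = ⊤ ↔ a2 * d1 - d2 * a1 ≠ 0 :=
    span_pair_eq_top_iff a1 d1 a2 d2
  have hbracket : bracket4 V1 V2 ≠ 0 ↔ c1 * a2 - a1 * c2 ≠ 0 ∨ a1 * b2 - b1 * a2 ≠ 0 := by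
    simp [bracket4_eq_zero_iff, V1, V2, or_iff_not_and_not]
  rw [← hbracket]
  constructor
  · intro h
    constructor
    · have hcomap := h (comap projThetaZ (span ℝ {projThetaZ V1, projThetaZ V2}))
        (subset_span (by simp)) (subset_span (by simp))
        (IsBracketClosed.of_ker_projThetaZ_le (LinearMap.ker_le_comap _))
      rwa [eq_top_iff_map_eq_top_of_ker_le range_projThetaZ (LinearMap.ker_le_comap _),
        map_comap_eq, range_projThetaZ, top_inf_eq, hspan] at hcomap
    · intro h0
      refine span_pair_ne_top_of_two_lt_finrank (by simp) V1 V2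
        (h _ (subset_span (by simp)) (subset_span (by simp)) (isBracketClosed_span_pair h0))
  · rintro ⟨hD, hW⟩ S hV1 hV2 hS
    have ha : V1 0 ≠ 0 ∨ V2 0 ≠ 0 := by
      by_contra! ha
      simp only [V1, V2, Matrix.cons_val_zero] at ha
      simp [ha] at hD
    have hker := IsBracketClosed.ker_projThetaZ_le hS hV1 hV2 ha hW
    rw [eq_top_iff_map_eq_top_of_ker_le range_projThetaZ hker, eq_top_iff, ← hspan.mpr hD,
      span_le]
    rintro _ (rfl | rfl)
    exacts [mem_map_of_mem hV1, mem_map_of_mem hV2]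
end

section
/- Let V1 = (1,b1,c1,d1) and V2 = (0,b2,c2,1) in se(2) × R with b2² + c2² ≠ 0. For a target (θ,x,y,z) ∈ SE(2) × R define γ = z − d1θ, [α;β] = (1/(b2²+c2²))·[[b2,c2],[−c2,b2]]·([x;y] − [[−c1,b1],[b1,c1]]·[1−cos θ; sin θ]), ρ = √(α²+β²). Then there exist t1,…,t5 ∈ R solving θ = t1+t3+t5, z = t2+t4+d1θ, and [α;β] = [cos t1; sin t1]t2 + [cos(t1+t3); sin(t1+t3)]t4; in particular exp(t1V1)exp(t2V2)exp(t3V1)exp(t4V2)exp(t5V1) = (θ,x,y,z), so FK^(1,2,1,2,1) is surjective onto SE(2) × R. -/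
open Matrix Real
open scoped Nat

lemma exp_rot_aux (A : Matrix (Fin 3) (Fin 3) ℝ) (hA : A ^ 3 = -A) (t : ℝ) :
    NormedSpace.exp (t • A) = 1 + Real.sin t • A + (1 - Real.cos t) • A ^ 2 := by
  have hodd : ∀ k : ℕ, A ^ (2 * k + 1) = ((-1 : ℝ)) ^ k • A := by
    intro k
    induction k with
    | zero => simp
    | succ n ih =>
      have h2 : 2 * (n + 1) + 1 = (2 * n + 1) + 2 := by ring
      rw [h2, pow_add, ih, Matrix.smul_mul, ← pow_succ' A 2, hA, smul_neg, ← neg_smul]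
      congr 1
      ring
  have heven : ∀ k : ℕ, A ^ (2 * k + 2) = ((-1 : ℝ)) ^ k • A ^ 2 := by
    intro k
    induction k with
    | zero => simp
    | succ n ih =>
      have h2 : 2 * (n + 1) + 2 = (2 * n + 2) + 2 := by ring
      have h4 : A ^ 2 * A ^ 2 = - A ^ 2 := by
        rw [← pow_add]
        have : (4 : ℕ) = 3 + 1 := rfl
        rw [show (2 + 2 : ℕ) = 3 + 1 from rfl, pow_add, hA, pow_one, Matrix.neg_mul, ← pow_two]
      rw [h2, pow_add, ih, Matrix.smul_mul, h4, smul_neg, ← neg_smul]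
      congr 1
      ring
  have hterm : ∀ n : ℕ, ((n ! : ℝ)⁻¹) • (t • A) ^ n = (t ^ n * ((n ! : ℝ))⁻¹) • A ^ n := by
    intro n
    rw [smul_pow, smul_smul, mul_comm]
  have hO : HasSum (fun k : ℕ => (((2 * k + 1)! : ℝ)⁻¹) • (t • A) ^ (2 * k + 1)) (Real.sin t • A) := by
    have hfe : (fun k : ℕ => (((2 * k + 1)! : ℝ)⁻¹) • (t • A) ^ (2 * k + 1))
        = fun k : ℕ => ((-1 : ℝ) ^ k * t ^ (2 * k + 1) / (2 * k + 1)!) • A := by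
      funext k
      rw [hterm, hodd, smul_smul]
      congr 1
      rw [div_eq_mul_inv]
      ring
    rw [hfe]
    exact (Real.hasSum_sin t).smul_const A
  have hE : HasSum (fun k : ℕ => (((2 * k)! : ℝ)⁻¹) • (t • A) ^ (2 * k))
      (1 + (1 - Real.cos t) • A ^ 2) := by
    have h1 : HasSum (fun k : ℕ => (-1 : ℝ) ^ (k + 1) * t ^ (2 * (k + 1)) / (2 * (k + 1))!)
        (Real.cos t - 1) := by
      have := (hasSum_nat_add_iff'
        (f := fun n : ℕ => (-1 : ℝ) ^ n * t ^ (2 * n) / (2 * n)!) 1).mpr (Real.hasSum_cos t)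
      simpa using this
    have h2 : HasSum (fun k : ℕ => ((-1 : ℝ) ^ k * t ^ (2 * (k + 1)) / (2 * (k + 1))!))
        (1 - Real.cos t) := by
      have hfg : (fun k : ℕ => ((-1 : ℝ) ^ k * t ^ (2 * (k + 1)) / (2 * (k + 1))!))
          = fun k : ℕ => -((-1 : ℝ) ^ (k + 1) * t ^ (2 * (k + 1)) / (2 * (k + 1))!) := by
        funext k; ring
      rw [hfg, show (1 - Real.cos t) = -(Real.cos t - 1) by ring]
      exact h1.neg
    have h3 : HasSum (fun k : ℕ => (((2 * (k + 1))! : ℝ)⁻¹) • (t • A) ^ (2 * (k + 1)))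
        ((1 - Real.cos t) • A ^ 2) := by
      have hfe : (fun k : ℕ => (((2 * (k + 1))! : ℝ)⁻¹) • (t • A) ^ (2 * (k + 1)))
          = fun k : ℕ => ((-1 : ℝ) ^ k * t ^ (2 * (k + 1)) / (2 * (k + 1))!) • A ^ 2 := by
        funext k
        have h2k : 2 * (k + 1) = 2 * k + 2 := by ring
        rw [h2k, hterm, heven, smul_smul]
        congr 1
        rw [div_eq_mul_inv]
        ring
      rw [hfe]
      exact h2.smul_const _
    have h4 := HasSum.zero_add (f := fun k : ℕ => (((2 * k)! : ℝ)⁻¹) • (t • A) ^ (2 * k)) h3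
    have h5 : (fun k : ℕ => (((2 * k)! : ℝ)⁻¹) • (t • A) ^ (2 * k)) 0 + (1 - Real.cos t) • A ^ 2
        = 1 + (1 - Real.cos t) • A ^ 2 := by norm_num
    rw [h5] at h4
    exact h4
  have hfull := HasSum.even_add_odd (f := fun n : ℕ => ((n.factorial : ℝ)⁻¹) • (t • A) ^ n) hE hO
  simp only [NormedSpace.exp_eq_tsum ℝ]
  rw [hfull.tsum_eq]
  abel

lemma exp_nil (B : Matrix (Fin 3) (Fin 3) ℝ) (hB : B ^ 2 = 0) (t : ℝ) :
    NormedSpace.exp (t • B) = 1 + t • B := by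
  simp only [NormedSpace.exp_eq_tsum ℝ]
  have hz : ∀ n ∉ Finset.range 2, ((n ! : ℝ)⁻¹) • (t • B) ^ n = 0 := by
    intro n hn
    simp only [Finset.mem_range, not_lt] at hn
    obtain ⟨m, rfl⟩ : ∃ m, n = m + 2 := ⟨n - 2, by omega⟩
    have : (t • B) ^ 2 = 0 := by
      rw [smul_pow, hB, smul_zero]
    rw [pow_add, this, mul_zero, smul_zero]
  rw [tsum_eq_sum hz]
  simp [Finset.sum_range_succ]

lemma se2_one_cube (b c : ℝ) : (se2 1 b c) ^ 3 = -(se2 1 b c) := by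
  show se2 1 b c ^ (2 + 1) = _
  rw [pow_add, pow_two, pow_one]
  ext i j
  fin_cases i <;> fin_cases j <;>
    simp [se2, eθ, ex, ey, Matrix.mul_apply, Fin.sum_univ_three, Matrix.vecHead, Matrix.vecTail]

lemma se2_zero_sq (b c : ℝ) : (se2 0 b c) ^ 2 = 0 := by
  rw [pow_two]
  ext i j
  fin_cases i <;> fin_cases j <;>
    simp [se2, eθ, ex, ey, Matrix.mul_apply, Fin.sum_univ_three, Matrix.vecHead, Matrix.vecTail]

lemma gSE2_mul_s16 (a p q b r s : ℝ) :
    gSE2 a p q * gSE2 b r s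
      = gSE2 (a + b) (p + cos a * r - sin a * s) (q + sin a * r + cos a * s) := by
  ext i j
  fin_cases i <;> fin_cases j <;>
    simp [gSE2, Matrix.mul_apply, Fin.sum_univ_three, cos_add, sin_add] <;> ring

lemma exp_se2_rot (b c t : ℝ) :
    NormedSpace.exp (t • se2 1 b c)
      = gSE2 t (b * sin t - c * (1 - cos t)) (c * sin t + b * (1 - cos t)) := by
  rw [exp_rot_aux _ (se2_one_cube b c) t]
  ext i j
  fin_cases i <;> fin_cases j <;>
    simp [se2, eθ, ex, ey, gSE2, pow_two, Matrix.mul_apply, Fin.sum_univ_three,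
      Matrix.one_apply, Matrix.vecHead, Matrix.vecTail] <;> ring

lemma exp_se2_trans (b c t : ℝ) :
    NormedSpace.exp (t • se2 0 b c) = gSE2 0 (t * b) (t * c) := by
  rw [exp_nil _ (se2_zero_sq b c) t]
  ext i j
  fin_cases i <;> fin_cases j <;>
    simp [se2, eθ, ex, ey, gSE2, Matrix.one_apply, Matrix.vecHead, Matrix.vecTail] <;> ring

lemma key_prod (b1 c1 d1 b2 c2 θ x y z t1 t2 t3 t4 t5 : ℝ)
    (h1 : θ = t1 + t3 + t5) (h2 : z = t2 + t4 + d1 * θ)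
    (hx : x = b2 * (cos t1 * t2 + cos (t1 + t3) * t4) - c2 * (sin t1 * t2 + sin (t1 + t3) * t4)
        + (b1 * sin θ - c1 * (1 - cos θ)))
    (hy : y = c2 * (cos t1 * t2 + cos (t1 + t3) * t4) + b2 * (sin t1 * t2 + sin (t1 + t3) * t4)
        + (c1 * sin θ + b1 * (1 - cos θ))) :
    (NormedSpace.exp (t1 • se2 1 b1 c1) * NormedSpace.exp (t2 • se2 0 b2 c2) *
        NormedSpace.exp (t3 • se2 1 b1 c1) * NormedSpace.exp (t4 • se2 0 b2 c2) *
        NormedSpace.exp (t5 • se2 1 b1 c1),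
      t1 * d1 + t2 + t3 * d1 + t4 + t5 * d1) = (gSE2 θ x y, z) := by
  have hz : t1 * d1 + t2 + t3 * d1 + t4 + t5 * d1 = z := by rw [h2, h1]; ring
  rw [exp_se2_rot, exp_se2_trans, exp_se2_rot, exp_se2_trans, exp_se2_rot,
    gSE2_mul_s16, gSE2_mul_s16, gSE2_mul_s16, gSE2_mul_s16]
  simp only [add_zero]
  rw [Prod.mk.injEq]
  refine ⟨?_, hz⟩
  have hgoal : ∀ pp qq : ℝ, pp = x → qq = y → gSE2 (t1 + t3 + t5) pp qq = gSE2 θ x y := by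
    intro pp qq hpp hqq; rw [hpp, hqq, ← h1]
  apply hgoal
  · rw [hx, h1]; simp only [cos_add, sin_add]; ring
  · rw [hy, h1]; simp only [cos_add, sin_add]; ring

/-- Inversion for T1-systems on SE(2) × ℝ: FK^(1,2,1,2,1) is globally surjective; for every
target (θ,x,y,z) there exist coasting times solving the angle, height and (x,y) equations. -/
theorem inversion_T1_SE2R (b1 c1 d1 b2 c2 : ℝ) (h : b2 ^ 2 + c2 ^ 2 ≠ 0)
    (θ x y z : ℝ) :
    let p := x - (-c1 * (1 - cos θ) + b1 * sin θ)
    let q := y - (b1 * (1 - cos θ) + c1 * sin θ)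
    let α := (1 / (b2 ^ 2 + c2 ^ 2)) * (b2 * p + c2 * q)
    let β := (1 / (b2 ^ 2 + c2 ^ 2)) * (-c2 * p + b2 * q)
    ∃ t1 t2 t3 t4 t5 : ℝ,
      θ = t1 + t3 + t5 ∧
      z = t2 + t4 + d1 * θ ∧
      α = cos t1 * t2 + cos (t1 + t3) * t4 ∧
      β = sin t1 * t2 + sin (t1 + t3) * t4 ∧
      (NormedSpace.exp (t1 • se2 1 b1 c1) * NormedSpace.exp (t2 • se2 0 b2 c2) *
          NormedSpace.exp (t3 • se2 1 b1 c1) * NormedSpace.exp (t4 • se2 0 b2 c2) *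
          NormedSpace.exp (t5 • se2 1 b1 c1),
        t1 * d1 + t2 + t3 * d1 + t4 + t5 * d1) = (gSE2 θ x y, z) := by
  intro p q α β
  have hα_def : α = (1 / (b2 ^ 2 + c2 ^ 2)) *
      (b2 * (x - (-c1 * (1 - cos θ) + b1 * sin θ)) + c2 * (y - (b1 * (1 - cos θ) + c1 * sin θ))) := rfl
  have hβ_def : β = (1 / (b2 ^ 2 + c2 ^ 2)) *
      (-c2 * (x - (-c1 * (1 - cos θ) + b1 * sin θ)) + b2 * (y - (b1 * (1 - cos θ) + c1 * sin θ))) := rfl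
  set ρ : ℝ := Real.sqrt (α ^ 2 + β ^ 2) with hρ
  set ψ : ℝ := Complex.arg (α + β * Complex.I) with hψ
  have habs : ‖(α + β * Complex.I : ℂ)‖ = ρ := by
    rw [Complex.norm_add_mul_I]
  have hcos : ρ * cos ψ = α := by
    have := Complex.norm_mul_cos_arg (α + β * Complex.I)
    rw [habs] at this
    simpa using this
  have hsin : ρ * sin ψ = β := by
    have := Complex.norm_mul_sin_arg (α + β * Complex.I)
    rw [habs] at this
    simpa using this
  refine ⟨ψ + π, ((z - d1 * θ) - ρ) / 2, -π, ((z - d1 * θ) + ρ) / 2, θ - ψ,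
    by ring, by ring, ?_, ?_, ?_⟩
  · have e1 : ψ + π + -π = ψ := by ring
    rw [e1, Real.cos_add_pi]
    linear_combination -hcos
  · have e1 : ψ + π + -π = ψ := by ring
    rw [e1, Real.sin_add_pi]
    linear_combination -hsin
  · have e1 : ψ + π + -π = ψ := by ring
    apply key_prod
    · ring
    · ring
    · rw [e1, Real.cos_add_pi, Real.sin_add_pi]
      have hx' : b2 * α - c2 * β = x - (-c1 * (1 - cos θ) + b1 * sin θ) := by
        rw [hα_def, hβ_def]
        field_simp
        ring
      have h2 : b2 * (ρ * cos ψ) - c2 * (ρ * sin ψ) = x - (-c1 * (1 - cos θ) + b1 * sin θ) := by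
        rw [hcos, hsin]; exact hx'
      linear_combination -h2
    · rw [e1, Real.cos_add_pi, Real.sin_add_pi]
      have hy' : c2 * α + b2 * β = y - (b1 * (1 - cos θ) + c1 * sin θ) := by
        rw [hα_def, hβ_def]
        field_simp
        ring
      have h2 : c2 * (ρ * cos ψ) + b2 * (ρ * sin ψ) = y - (b1 * (1 - cos θ) + c1 * sin θ) := by
        rw [hcos, hsin]; exact hy'
      linear_combination -h2
end
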